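/- arXiv:2003.05678 — 3 statements merged into one kernel-verified Lean document; each statement's English description precedes it below -/
import Mathlib

section
/- Soundness of the (HH) rule: let Q : {0,1}^k → {0,1} and R : {0,1}^{k+1} → C, where R's first argument is a variable y0'. Then ∑_{y0, y0' ∈ {0,1}, y⃗ ∈ {0,1}^k} e^{2iπ·(y0/2)·(y0' + Q(y⃗))}·R(y0', y⃗) = 2·∑_{y⃗ ∈ {0,1}^k} R(Q(y⃗), y⃗). -/
noncomputable section

/-- `e2pi x = e^{2iπx}`. -/
def e2pi (x : ℝ) : ℂ := Complex.exp (2 * (Real.pi : ℂ) * Complex.I * (x : ℂ))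

/-- The real value (`0` or `1`) of a Boolean. -/
def bR (b : Bool) : ℝ := if b then 1 else 0

/-- Soundness of the (HH) rule:
`∑_{y0,y0',y⃗} e^{2iπ·(y0/2)·(y0' + Q(y⃗))}·R(y0',y⃗) = 2·∑_{y⃗} R(Q(y⃗),y⃗)`. -/
theorem stmt_4 (k : ℕ) (Q : (Fin k → Bool) → Bool) (R : Bool → (Fin k → Bool) → ℂ) :
    ∑ y0 : Bool, ∑ y0' : Bool, ∑ v : Fin k → Bool,
      e2pi ((bR y0 / 2) * (bR y0' + bR (Q v))) * R y0' v
    = 2 * ∑ v : Fin k → Bool, R (Q v) v := by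
  have h0 : e2pi 0 = 1 := by simp [e2pi]
  have h1 : e2pi 1 = 1 := by
    have : (2 * (Real.pi : ℂ) * Complex.I * ((1 : ℝ) : ℂ)) = 2 * Real.pi * Complex.I := by
      push_cast; ring
    simp [e2pi, this, Complex.exp_two_pi_mul_I]
  have hh : e2pi (1 / 2) = -1 := by
    have : (2 * (Real.pi : ℂ) * Complex.I * (((1 : ℝ) / 2 : ℝ) : ℂ)) = Real.pi * Complex.I := by
      push_cast; ring
    rw [e2pi, this, Complex.exp_pi_mul_I]
  simp only [Fintype.sum_bool]
  rw [show (2 : ℂ) * ∑ v : Fin k → Bool, R (Q v) v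
      = ∑ v : Fin k → Bool, 2 * R (Q v) v from Finset.mul_sum _ _ _]
  rw [← Finset.sum_add_distrib, ← Finset.sum_add_distrib, ← Finset.sum_add_distrib]
  apply Finset.sum_congr rfl
  intro v _
  cases hq : Q v <;> simp [bR, hq] <;> norm_num [h0, h1, hh] <;> ring
end
end

section
/- Soundness of the (ω) rule: for any Q : {0,1}^k → {0,1} and R : {0,1}^k → R, ∑_{y0 ∈ {0,1}, y⃗} e^{2iπ(y0/4 + (y0/2)·Q(y⃗) + R(y⃗))} = √2 · ∑_{y⃗} e^{2iπ(1/8 - Q(y⃗)/4 + R(y⃗))}. -/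
noncomputable section

lemma e2pi_add (a b : ℝ) : e2pi (a + b) = e2pi a * e2pi b := by
  simp [e2pi, ← Complex.exp_add]; ring_nf

lemma e2pi_val (x : ℝ) : e2pi x = Real.cos (2 * Real.pi * x) + Real.sin (2 * Real.pi * x) * Complex.I := by
  have h : 2 * (Real.pi : ℂ) * Complex.I * (x : ℂ) = ((2 * Real.pi * x : ℝ) : ℂ) * Complex.I := by
    push_cast; ring
  rw [e2pi, h, Complex.exp_mul_I, ← Complex.ofReal_cos, ← Complex.ofReal_sin]

lemma sqrt2_sq : (Real.sqrt 2 : ℂ) * (Real.sqrt 2 : ℂ) = 2 := by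
  exact_mod_cast Real.mul_self_sqrt (by norm_num : (0:ℝ) ≤ 2)

lemma key0 : (1 : ℂ) + e2pi (1/4) = (Real.sqrt 2 : ℂ) * e2pi (1/8) := by
  rw [e2pi_val, e2pi_val]
  have h1 : 2 * Real.pi * (1/4) = Real.pi / 2 := by ring
  have h2 : 2 * Real.pi * (1/8) = Real.pi / 4 := by ring
  rw [h1, h2, Real.cos_pi_div_two, Real.sin_pi_div_two, Real.cos_pi_div_four,
    Real.sin_pi_div_four]
  push_cast
  have := sqrt2_sq
  have hs : (Real.sqrt 2 : ℂ) ≠ 0 := by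
    intro h; rw [h] at this; norm_num at this
  field_simp
  linear_combination (-1 - Complex.I) * this

lemma key1 : (1 : ℂ) + e2pi (3/4) = (Real.sqrt 2 : ℂ) * e2pi (-(1/8)) := by
  rw [e2pi_val, e2pi_val]
  have h1 : 2 * Real.pi * (3/4) = Real.pi + Real.pi / 2 := by ring
  have h2 : 2 * Real.pi * (-(1/8)) = -(Real.pi / 4) := by ring
  rw [h1, h2, Real.cos_add, Real.sin_add, Real.cos_neg, Real.sin_neg, Real.cos_pi, Real.sin_pi,
    Real.cos_pi_div_two, Real.sin_pi_div_two, Real.cos_pi_div_four, Real.sin_pi_div_four]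
  push_cast
  have := sqrt2_sq
  have hs : (Real.sqrt 2 : ℂ) ≠ 0 := by
    intro h; rw [h] at this; norm_num at this
  field_simp
  linear_combination (-1 + Complex.I) * this

lemma step0 (r : ℝ) : e2pi r + e2pi (1/4 + r) = (Real.sqrt 2 : ℂ) * e2pi (1/8 + r) := by
  rw [e2pi_add, e2pi_add, ← mul_assoc, ← key0]; ring

lemma step1 (r : ℝ) : e2pi r + e2pi (3/4 + r) = (Real.sqrt 2 : ℂ) * e2pi (-(1/8) + r) := by
  rw [e2pi_add, e2pi_add, ← mul_assoc, ← key1]; ring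

/-- Soundness of the (ω) rule:
`∑_{y0,y⃗} e^{2iπ(y0/4 + (y0/2)Q(y⃗) + R(y⃗))} = √2·∑_{y⃗} e^{2iπ(1/8 - Q(y⃗)/4 + R(y⃗))}`. -/
theorem stmt_5 (k : ℕ) (Q : (Fin k → Bool) → Bool) (R : (Fin k → Bool) → ℝ) :
    ∑ y0 : Bool, ∑ v : Fin k → Bool,
      e2pi (bR y0 / 4 + (bR y0 / 2) * bR (Q v) + R v)
    = (Real.sqrt 2 : ℂ) * ∑ v : Fin k → Bool, e2pi (1 / 8 - bR (Q v) / 4 + R v) := by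
  rw [Fintype.sum_bool, ← Finset.sum_add_distrib, Finset.mul_sum]
  apply Finset.sum_congr rfl
  intro v _
  have ht : bR true = (1:ℝ) := by simp [bR]
  have hf : bR false = (0:ℝ) := by simp [bR]
  cases hq : Q v
  · rw [ht, hf]
    rw [show (1:ℝ)/4 + 1/2*0 + R v = 1/4 + R v from by ring,
        show (0:ℝ)/4 + 0/2*0 + R v = R v from by ring,
        show (1:ℝ)/8 - 0/4 + R v = 1/8 + R v from by ring,
        add_comm, step0]
  · rw [ht, hf]
    rw [show (1:ℝ)/4 + 1/2*1 + R v = 3/4 + R v from by ring,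
        show (0:ℝ)/4 + 0/2*1 + R v = R v from by ring,
        show (1:ℝ)/8 - 1/4 + R v = -(1/8) + R v from by ring,
        add_comm, step1]
end
end

section
/- Local complementation phase identity: for Boolean variables x1,...,xn, the hat-lift of x1 ⊕ ... ⊕ xn satisfies −(1/4)·(x1⊕...⊕xn)^ ≡ −(1/4)·∑_i x_i + (1/2)·∑_{i<j} x_i x_j (mod 1) as functions {0,1}^n → R/Z. -/
lemma pair_count (n : ℕ) (b : Fin n → Bool) :
    2 * (∑ i, ∑ j, if i < j ∧ b i ∧ b j then (1 : ℝ) else 0)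
      = (∑ i, (if b i then (1 : ℝ) else 0))^2
        - (∑ i, (if b i then (1 : ℝ) else 0)) := by
  set x : Fin n → ℝ := fun i => if b i then 1 else 0 with hx
  have h1 : (∑ i, x i)^2 = ∑ i, ∑ j, x i * x j := by
    rw [sq, Finset.sum_mul_sum]
  have hsplit : ∀ i j : Fin n, x i * x j =
      (if i < j then x i * x j else 0) + (if j < i then x i * x j else 0)
        + (if i = j then x i * x j else 0) := by
    intro i j
    rcases lt_trichotomy i j with h | h | h
    · simp [h, h.ne, h.not_gt]
    · simp [h]
    · simp [h, h.ne', h.not_gt]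
  have h2 : ∑ i, ∑ j, x i * x j =
      (∑ i, ∑ j, if i < j then x i * x j else 0)
      + (∑ i, ∑ j, if j < i then x i * x j else 0)
      + (∑ i, if b i then (1:ℝ) else 0) := by
    calc ∑ i, ∑ j, x i * x j
        = ∑ i, ∑ j, ((if i < j then x i * x j else 0)
            + (if j < i then x i * x j else 0)
            + (if i = j then x i * x j else 0)) := by
          refine Finset.sum_congr rfl fun i _ => Finset.sum_congr rfl fun j _ => hsplit i j
      _ = (∑ i, ∑ j, if i < j then x i * x j else 0)
          + (∑ i, ∑ j, if j < i then x i * x j else 0)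
          + (∑ i, ∑ j, if i = j then x i * x j else 0) := by
          simp [Finset.sum_add_distrib]
      _ = _ := by
          congr 1
          refine Finset.sum_congr rfl fun i _ => ?_
          rw [Finset.sum_ite_eq (Finset.univ) i (fun j => x i * x j)]
          by_cases hi : b i <;> simp [hi, hx]
  have h3 : (∑ i, ∑ j, if j < i then x i * x j else 0)
      = (∑ i, ∑ j, if i < j then x i * x j else 0) := by
    rw [Finset.sum_comm]
    refine Finset.sum_congr rfl fun i _ => Finset.sum_congr rfl fun j _ => ?_
    by_cases h : i < j <;> simp [h, mul_comm]
  have h4 : (∑ i, ∑ j, if i < j ∧ b i ∧ b j then (1 : ℝ) else 0)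
      = (∑ i, ∑ j, if i < j then x i * x j else 0) := by
    refine Finset.sum_congr rfl fun i _ => Finset.sum_congr rfl fun j _ => ?_
    by_cases h : i < j
    · by_cases hi : b i <;> by_cases hj : b j <;> simp [h, hi, hj, hx]
    · simp [h]
  rw [h4, h1, h2, h3]
  ring

/-- Local complementation phase identity: for `b⃗ ∈ {0,1}^n` with parity
`p = b1⊕⋯⊕bn`, one has `−p/4 ≡ −(∑ b_i)/4 + (∑_{i<j} b_i b_j)/2 (mod 1)`,
i.e. the hat-lift of `x1⊕⋯⊕xn` satisfies
`−(1/4)(x1⊕⋯⊕xn)^ ≡ −(1/4)∑ x_i + (1/2)∑_{i<j} x_i x_j (mod 1)` on `{0,1}^n`. -/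
theorem stmt_18 (n : ℕ) (b : Fin n → Bool) :
    ∃ k : ℤ,
      -(((∑ i, (if b i then 1 else 0 : ℕ)) % 2 : ℕ) : ℝ) / 4
        - (-(∑ i, (if b i then (1 : ℝ) else 0)) / 4
            + (∑ i, ∑ j, if i < j ∧ b i ∧ b j then (1 : ℝ) else 0) / 2)
      = (k : ℝ) := by
  set m : ℕ := ∑ i, (if b i then 1 else 0 : ℕ) with hm
  have hS : (∑ i, (if b i then (1 : ℝ) else 0)) = (m : ℝ) := by
    rw [hm]
    push_cast
    refine Finset.sum_congr rfl fun i _ => ?_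
    split <;> simp
  have hD := pair_count n b
  rw [hS] at hD
  rcases Nat.even_or_odd m with ⟨t, ht⟩ | ⟨t, ht⟩
  · have h2 : m % 2 = 0 := by omega
    refine ⟨(t : ℤ) - t^2, ?_⟩
    rw [hS, h2]
    have hD' : (∑ i, ∑ j, if i < j ∧ b i ∧ b j then (1 : ℝ) else 0)
        = ((m : ℝ)^2 - m) / 2 := by linarith
    rw [hD', ht]
    push_cast
    ring
  · have h2 : m % 2 = 1 := by omega
    refine ⟨-(t : ℤ)^2, ?_⟩
    rw [hS, h2]
    have hD' : (∑ i, ∑ j, if i < j ∧ b i ∧ b j then (1 : ℝ) else 0)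
        = ((m : ℝ)^2 - m) / 2 := by linarith
    rw [hD', ht]
    push_cast
    ring
end
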